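/- For each n ≥ 1 the map φ_n sending the word z_{i₁,j₁}⋯z_{i_k,j_k} to the polynomial Σ_{n≥n₁>⋯>n_k≥1} ω^{j₁n₁+⋯+j_k n_k} t_{n₁}^{i₁}⋯t_{n_k}^{i_k} (with ω = e^{2πi/r}) is a homomorphism of graded algebras from the Euler algebra (Ɛ_r, *) to ℂ[t₁,…,tₙ]; moreover φ_{nr} is injective in degrees ≤ n. -/

import Mathlib

open Finsupp Classical

noncomputable section

variable {A : Type} 

/-- The word `w` as a basis element of the free module `k⟨A⟩`. -/
def sing (k : Type) [Field k] (w : List A) : List A →₀ k := Finsupp.single w 1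

/-- Left multiplication of a linear combination of words by a letter. -/
def consF (k : Type) [Field k] (a : A) (f : List A →₀ k) : List A →₀ k :=
  f.mapDomain (List.cons a)

/-- Left multiplication by an element of `A ∪ {0}` (with `none` playing the role of `0`). -/
def oconsF (k : Type) [Field k] : Option A → (List A →₀ k) → (List A →₀ k)
  | none, _ => 0
  | Option.some a, f => consF k a f

/-- The quasi-shuffle product of two words, with structure operation `br : A → A → Option A`
(`none` = 0):  `1*w = w*1 = w` and
`aw₁ * bw₂ = a(w₁*bw₂) + b(aw₁*w₂) + [a,b](w₁*w₂)`. -/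
def qsh (k : Type) [Field k] (br : A → A → Option A) : List A → List A → (List A →₀ k)
  | [], w => sing k w
  | a :: u, [] => sing k (a :: u)
  | a :: u, b :: v =>
      consF k a (qsh k br u (b :: v)) + consF k b (qsh k br (a :: u) v)
        + oconsF k (br a b) (qsh k br u v)
  termination_by w1 w2 => w1.length + w2.length

/-- Linear extension of a map defined on words. -/
def liftOne (k : Type) [Field k] {α β : Type} (f : α → (β →₀ k)) : (α →₀ k) → (β →₀ k) :=
  fun x => x.sum fun u c => c • f u

/-- Bilinear extension of a product defined on words. -/
def liftTwo (k : Type) [Field k] {α β : Type} (f : α → α → (β →₀ k)) :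
    (α →₀ k) → (α →₀ k) → (β →₀ k) :=
  fun x y => x.sum fun u cu => y.sum fun v cv => (cu * cv) • f u v

/-- The degree of a word: the sum of the degrees of its letters. -/
def degW (deg : A → ℕ) (w : List A) : ℕ := (w.map deg).sum

/-- The iterated bracket `[S]` of a nonempty sequence of letters (`none` = 0). -/
def brS (br : A → A → Option A) : List A → Option A
  | [] => none
  | [a] => some a
  | a :: b :: w => (brS br (b :: w)).bind (br a)

/-- The contraction `I[w]` of the word `w` along the composition with list of parts `I`:
consecutive blocks of `w` of lengths given by `I` are contracted via the iterated bracket;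
the result is `0` if some bracket vanishes. -/
def contract (k : Type) [Field k] (br : A → A → Option A) : List ℕ → List A → (List A →₀ k)
  | [], w => (match w with | [] => sing k [] | _ => 0)
  | i :: I, w => oconsF k (brS br (w.take i)) (contract k br I (w.drop i))

end

/-- The bracket of the Euler algebra `Ɛ_r`: `[z_{n,i}, z_{m,j}] = z_{n+m, i+j mod r}`,
where a letter `z_{m,i}` is encoded as the pair `(m, i) : ℕ+ × ZMod r`. -/
def ebr (r : ℕ) : (ℕ+ × ZMod r) → (ℕ+ × ZMod r) → Option (ℕ+ × ZMod r) :=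
  fun a b => some (a.1 + b.1, a.2 + b.2)

/-- The degree of a word of the Euler algebra: `|z_{i₁,j₁}⋯z_{i_k,j_k}| = i₁ + ⋯ + i_k`. -/
def degE {r : ℕ} (w : List (ℕ+ × ZMod r)) : ℕ := (w.map fun a => (a.1 : ℕ)).sum

/-- The map `φ_n` on words of the Euler algebra:
`φ_n(z_{i₁,j₁}⋯z_{i_k,j_k}) = Σ_{n ≥ n₁ > ⋯ > n_k ≥ 1} ω^{j₁n₁+⋯+j_kn_k} t_{n₁}^{i₁}⋯t_{n_k}^{i_k}`
with `ω = e^{2πi/r}`, defined by the recursion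
`φ_n(z_{p,i} w) = Σ_{1 ≤ m ≤ n} ω^{im} t_m^p φ_{m-1}(w)`. -/
noncomputable def ephi (r : ℕ) : ℕ → List (ℕ+ × ZMod r) → MvPolynomial ℕ ℂ
  | _, [] => 1
  | n, a :: w => ∑ m ∈ Finset.Icc 1 n,
      MvPolynomial.C ((Complex.exp (2 * Real.pi * Complex.I / r)) ^ (a.2.val * m))
        * MvPolynomial.X m ^ (a.1 : ℕ) * ephi r (m - 1) w

/-- Linear extension of a word-indexed family of polynomials to the Euler algebra. -/
noncomputable def ephiF (r : ℕ) (n : ℕ) (x : List (ℕ+ × ZMod r) →₀ ℂ) : MvPolynomial ℕ ℂ :=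
  x.sum fun u c => c • ephi r n u


namespace EulerAux

open MvPolynomial Finset

noncomputable def om (r : ℕ) : ℂ := Complex.exp (2 * Real.pi * Complex.I / r)

lemma om_pow_r (r : ℕ) (hr : 0 < r) : om r ^ r = 1 :=
  (Complex.isPrimitiveRoot_exp r hr.ne').pow_eq_one

lemma om_pow_mod (r : ℕ) (hr : 0 < r) (c : ℕ) : om r ^ c = om r ^ (c % r) := by
  conv_lhs => rw [← Nat.div_add_mod c r]
  rw [pow_add, pow_mul, om_pow_r r hr, one_pow, one_mul]

lemma om_modeq (r : ℕ) (hr : 0 < r) {a b : ℕ} (h : a ≡ b [MOD r]) :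
    om r ^ a = om r ^ b := by
  rw [om_pow_mod r hr a, om_pow_mod r hr b, h]

lemma ephi_nil (r n : ℕ) : ephi r n ([] : List (ℕ+ × ZMod r)) = 1 := by
  simp [ephi]

lemma ephi_cons (r n : ℕ) (a : ℕ+ × ZMod r) (w : List (ℕ+ × ZMod r)) :
    ephi r n (a :: w) = ∑ m ∈ Finset.Icc 1 n,
      MvPolynomial.C (om r ^ (a.2.val * m)) * MvPolynomial.X m ^ (a.1 : ℕ)
        * ephi r (m - 1) w := by
  simp [ephi, om]

lemma ephiF_single (r n : ℕ) (u : List (ℕ+ × ZMod r)) (c : ℂ) :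
    ephiF r n (Finsupp.single u c) = c • ephi r n u := by
  simp [ephiF, Finsupp.sum_single_index]

lemma ephiF_sing (r n : ℕ) (u : List (ℕ+ × ZMod r)) :
    ephiF r n (sing ℂ u) = ephi r n u := by
  simp [sing, ephiF_single]

lemma ephiF_add (r n : ℕ) (f g : List (ℕ+ × ZMod r) →₀ ℂ) :
    ephiF r n (f + g) = ephiF r n f + ephiF r n g := by
  simp [ephiF]
  exact Finsupp.sum_add_index' (by simp) (by intros; rw [add_smul])

lemma ephiF_consF (r : ℕ) (n : ℕ) (a : ℕ+ × ZMod r) (f : List (ℕ+ × ZMod r) →₀ ℂ) :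
    ephiF r n (consF ℂ a f) = ∑ m ∈ Finset.Icc 1 n,
      MvPolynomial.C (om r ^ (a.2.val * m)) * MvPolynomial.X m ^ (a.1 : ℕ)
        * ephiF r (m - 1) f := by
  rw [ephiF, consF, Finsupp.sum_mapDomain_index (by simp) (by intros; rw [add_smul])]
  rw [Finsupp.sum]
  simp_rw [ephi_cons, Finset.smul_sum]
  rw [Finset.sum_comm]
  refine Finset.sum_congr rfl fun m _ => ?_
  rw [ephiF, Finsupp.sum, Finset.mul_sum]
  simp_rw [mul_smul_comm]

end EulerAux

namespace EulerAux

lemma abel_id {R : Type} [CommRing R] (f g : ℕ → R) (n : ℕ) :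
    (∑ m ∈ Finset.Icc 1 n, f m) * (∑ m ∈ Finset.Icc 1 n, g m) =
      ∑ m ∈ Finset.Icc 1 n,
        (f m * ∑ m' ∈ Finset.Icc 1 (m - 1), g m'
          + g m * ∑ m' ∈ Finset.Icc 1 (m - 1), f m' + f m * g m) := by
  induction n with
  | zero => simp
  | succ n ih =>
      have h : Finset.Icc 1 (n + 1) = insert (n + 1) (Finset.Icc 1 n) := by
        ext m; simp; omega
      rw [h, Finset.sum_insert (by simp), Finset.sum_insert (by simp),
        Finset.sum_insert (by simp)]
      simp only [Nat.add_sub_cancel]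
      rw [← ih]; ring

lemma hom_aux (r : ℕ) (hr : 0 < r) :
    ∀ w1 w2 : List (ℕ+ × ZMod r), ∀ n : ℕ,
      ephiF r n (qsh ℂ (ebr r) w1 w2) = ephi r n w1 * ephi r n w2 := by
  intro w1 w2
  induction w1, w2 using qsh.induct with
  | case1 w => intro n; rw [qsh, ephiF_sing, ephi_nil, one_mul]
  | case2 a u => intro n; rw [qsh, ephiF_sing, ephi_nil, mul_one]
  | case3 a u b v ih1 ih2 ih3 =>
      intro n
      haveI : NeZero r := ⟨hr.ne'⟩
      rw [qsh, ephiF_add, ephiF_add, ephiF_consF, ephiF_consF, ebr, oconsF, ephiF_consF]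
      simp_rw [ih1, ih2, ih3]
      have hab := abel_id (R := MvPolynomial ℕ ℂ)
        (fun m => MvPolynomial.C (om r ^ (a.2.val * m)) * MvPolynomial.X m ^ ((a.1:ℕ+) : ℕ)
          * ephi r (m-1) u)
        (fun m => MvPolynomial.C (om r ^ (b.2.val * m)) * MvPolynomial.X m ^ ((b.1:ℕ+) : ℕ)
          * ephi r (m-1) v) n
      rw [ephi_cons r n a u, ephi_cons r n b v, hab]
      rw [← Finset.sum_add_distrib, ← Finset.sum_add_distrib]
      refine Finset.sum_congr rfl fun m hm => ?_
      rw [← ephi_cons, ← ephi_cons]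
      have hc : om r ^ (((a.2 + b.2 : ZMod r)).val * m)
          = om r ^ (a.2.val * m) * om r ^ (b.2.val * m) := by
        rw [← pow_add, ← add_mul]
        refine om_modeq r hr (Nat.ModEq.mul_right m ?_)
        rw [ZMod.val_add]
        exact Nat.mod_modEq _ r
      have hp : (((a.1 + b.1 : ℕ+)) : ℕ) = (a.1 : ℕ) + (b.1 : ℕ) := rfl
      rw [hp, hc, map_mul, pow_add]
      ring

end EulerAux

namespace EulerAux

lemma degE_cons {r : ℕ} (a : ℕ+ × ZMod r) (w : List (ℕ+ × ZMod r)) :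
    degE (a :: w) = (a.1 : ℕ) + degE w := by simp [degE]

lemma ephi_homog (r : ℕ) (n : ℕ) (w : List (ℕ+ × ZMod r)) :
    (ephi r n w).IsHomogeneous (degE w) := by
  induction w generalizing n with
  | nil => rw [ephi_nil]; simpa [degE] using MvPolynomial.isHomogeneous_one ℕ ℂ
  | cons a u ih =>
      rw [ephi_cons, degE_cons]
      refine MvPolynomial.IsHomogeneous.sum _ _ _ fun m _ => ?_
      have h1 := (MvPolynomial.isHomogeneous_C ℕ (om r ^ (a.2.val * m))).mul
        ((MvPolynomial.isHomogeneous_X ℂ m).pow (a.1 : ℕ))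
      have h2 := h1.mul (ih (m - 1))
      simpa using h2

lemma vars_ephi (r : ℕ) (n : ℕ) (w : List (ℕ+ × ZMod r)) :
    (ephi r n w).vars ⊆ Finset.Icc 1 n := by
  induction w generalizing n with
  | nil => rw [ephi_nil, MvPolynomial.vars_one]; exact Finset.empty_subset _
  | cons a u ih =>
      rw [ephi_cons]
      refine (MvPolynomial.vars_sum_subset _ _).trans ?_
      intro v hv
      simp only [Finset.mem_biUnion] at hv
      obtain ⟨m, hm, hv⟩ := hv
      simp only [Finset.mem_Icc] at hm
      have h1 := MvPolynomial.vars_mul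
        (MvPolynomial.C (om r ^ (a.2.val * m)) * MvPolynomial.X m ^ (a.1 : ℕ))
        (ephi r (m - 1) u)
      have h2 := MvPolynomial.vars_mul (MvPolynomial.C (om r ^ (a.2.val * m)) : MvPolynomial ℕ ℂ)
        (MvPolynomial.X m ^ (a.1 : ℕ))
      have hv' := h1 hv
      rw [Finset.mem_union] at hv'
      rcases hv' with hv' | hv'
      · have := h2 hv'
        rw [Finset.mem_union] at this
        rcases this with h | h
        · rw [MvPolynomial.vars_C] at h; exact absurd h (Finset.notMem_empty v)
        · have := MvPolynomial.vars_pow (MvPolynomial.X m : MvPolynomial ℕ ℂ) (a.1 : ℕ) h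
          rw [MvPolynomial.vars_X, Finset.mem_singleton] at this
          subst this
          simp only [Finset.mem_Icc]; omega
      · have := ih (m - 1) hv'
        simp only [Finset.mem_Icc] at this ⊢
        omega

lemma coeff_zero_of_var (μ : ℕ →₀ ℕ) (p : MvPolynomial ℕ ℂ) (v : ℕ)
    (hv : v ∈ μ.support) (h : v ∉ p.vars) : MvPolynomial.coeff μ p = 0 := by
  by_contra hc
  exact h ((MvPolynomial.mem_vars v).2 ⟨μ, by simpa [MvPolynomial.mem_support_iff] using hc, hv⟩)

end EulerAux

namespace EulerAux

/-- The monomial associated to a list of (variable, exponent) pairs. -/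
noncomputable def mon (p : List (ℕ × ℕ)) : ℕ →₀ ℕ := (p.map fun q => Finsupp.single q.1 q.2).sum

lemma mon_nil : mon ([] : List (ℕ × ℕ)) = 0 := rfl

lemma mon_cons (q : ℕ × ℕ) (p : List (ℕ × ℕ)) :
    mon (q :: p) = Finsupp.single q.1 q.2 + mon p := by simp [mon]

lemma mon_apply_zero (p : List (ℕ × ℕ)) (v : ℕ) (h : ∀ q ∈ p, q.1 ≠ v) : mon p v = 0 := by
  induction p with
  | nil => simp [mon_nil]
  | cons q p ih =>
      rw [mon_cons, Finsupp.add_apply, ih (fun q' hq' => h q' (List.mem_cons_of_mem q hq')),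
        add_zero, Finsupp.single_eq_of_ne' (h q (List.mem_cons_self))]

/-- Vars of one summand of `ephi`. -/
lemma vars_term (r : ℕ) (c : ℂ) (m i n : ℕ) (u : List (ℕ+ × ZMod r)) :
    (MvPolynomial.C c * MvPolynomial.X m ^ i * ephi r n u).vars ⊆
      insert m (Finset.Icc 1 n) := by
  intro v hv
  have hv' := MvPolynomial.vars_mul (MvPolynomial.C c * MvPolynomial.X m ^ i) (ephi r n u) hv
  rw [Finset.mem_union] at hv'
  rcases hv' with hv' | hv'
  · have h2 := MvPolynomial.vars_mul (MvPolynomial.C c : MvPolynomial ℕ ℂ)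
      (MvPolynomial.X m ^ i) hv'
    rw [Finset.mem_union] at h2
    rcases h2 with h | h
    · rw [MvPolynomial.vars_C] at h; exact absurd h (Finset.notMem_empty v)
    · have := MvPolynomial.vars_pow (MvPolynomial.X m : MvPolynomial ℕ ℂ) i h
      rw [MvPolynomial.vars_X, Finset.mem_singleton] at this
      subst this; exact Finset.mem_insert_self _ _
  · exact Finset.mem_insert_of_mem (vars_ephi r n u hv')

lemma coeff_ephi (r : ℕ) (hr : 0 < r) (w : List (ℕ+ × ZMod r)) :
    ∀ (N : ℕ) (p : List (ℕ × ℕ)),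
    List.Pairwise (fun q q' => q'.1 < q.1) p →
    (∀ q ∈ p, 1 ≤ q.1 ∧ q.1 ≤ N ∧ 1 ≤ q.2) →
    MvPolynomial.coeff (mon p) (ephi r N w) =
      if w.map (fun a => (a.1 : ℕ)) = p.map Prod.snd
      then om r ^ ((w.zip p).map fun q => q.1.2.val * q.2.1).sum else 0 := by
  induction w with
  | nil =>
      intro N p hp hb
      rw [ephi_nil, MvPolynomial.coeff_one]
      cases p with
      | nil => simp [mon_nil]
      | cons q p' =>
          have h1 : mon (q :: p') q.1 ≠ 0 := by
            rw [mon_cons, Finsupp.add_apply, Finsupp.single_eq_same,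
              mon_apply_zero p' q.1 (fun q' hq' => (List.rel_of_pairwise_cons hp hq').ne)]
            have := (hb q (List.mem_cons_self)).2.2
            omega
          have h2 : (0 : ℕ →₀ ℕ) ≠ mon (q :: p') := fun h => h1 (by rw [← h]; rfl)
          simp [h2]
  | cons a u ih =>
      intro N p hp hb
      rw [ephi_cons, MvPolynomial.coeff_sum]
      cases p with
      | nil =>
          rw [mon_nil]
          have hz : ∀ m ∈ Finset.Icc 1 N, MvPolynomial.coeff 0
              (MvPolynomial.C (om r ^ (a.2.val * m)) * MvPolynomial.X m ^ (a.1 : ℕ)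
                * ephi r (m - 1) u) = 0 := by
            intro m _
            rw [MvPolynomial.C_mul_X_pow_eq_monomial, MvPolynomial.coeff_monomial_mul']
            rw [if_neg]
            rw [Finsupp.single_le_iff]
            simp only [Finsupp.coe_zero, Pi.zero_apply, nonpos_iff_eq_zero]
            exact fun h => absurd h a.1.pos.ne'
          rw [Finset.sum_eq_zero hz]
          simp
      | cons q p' =>
          obtain ⟨hq1, hqN, hq2⟩ := hb q (List.mem_cons_self)
          have hlt : ∀ q' ∈ p', q'.1 < q.1 := fun q' hq' => List.rel_of_pairwise_cons hp hq'
          have hmonq : mon (q :: p') q.1 = q.2 := by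
            rw [mon_cons, Finsupp.add_apply, Finsupp.single_eq_same,
              mon_apply_zero p' q.1 (fun q' hq' => (hlt q' hq').ne), add_zero]
          have hvanish : ∀ m ∈ Finset.Icc 1 N, m ≠ q.1 → MvPolynomial.coeff (mon (q :: p'))
              (MvPolynomial.C (om r ^ (a.2.val * m)) * MvPolynomial.X m ^ (a.1 : ℕ)
                * ephi r (m - 1) u) = 0 := by
            intro m hm hne
            rcases lt_or_gt_of_ne hne with hlt' | hgt
            · refine coeff_zero_of_var _ _ q.1 ?_ ?_
              · rw [Finsupp.mem_support_iff, hmonq]; omega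
              · intro hv
                have h2 := vars_term r _ m (a.1 : ℕ) (m - 1) u hv
                rw [Finset.mem_insert, Finset.mem_Icc] at h2
                omega
            · rw [MvPolynomial.C_mul_X_pow_eq_monomial, MvPolynomial.coeff_monomial_mul',
                if_neg]
              rw [Finsupp.single_le_iff, mon_cons, Finsupp.add_apply,
                Finsupp.single_eq_of_ne' (by omega : q.1 ≠ m),
                mon_apply_zero p' m (fun q' hq' => by have := hlt q' hq'; omega), add_zero]
              simp only [nonpos_iff_eq_zero]
              exact fun h => absurd h a.1.pos.ne'
          rw [Finset.sum_eq_single_of_mem q.1 (Finset.mem_Icc.2 ⟨hq1, hqN⟩) hvanish]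
          by_cases ha : (a.1 : ℕ) = q.2
          · have hle : Finsupp.single q.1 (a.1 : ℕ) ≤ mon (q :: p') := by
              rw [Finsupp.single_le_iff, hmonq, ha]
            have hsub : mon (q :: p') - Finsupp.single q.1 (a.1 : ℕ) = mon p' := by
              rw [mon_cons, ← ha, add_tsub_cancel_left]
            rw [MvPolynomial.C_mul_X_pow_eq_monomial, MvPolynomial.coeff_monomial_mul',
              if_pos hle, hsub]
            rw [ih (q.1 - 1) p' (List.Pairwise.of_cons hp)
              (fun q' hq' => ⟨(hb q' (List.mem_cons_of_mem q hq')).1,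
                by have := hlt q' hq'; omega,
                (hb q' (List.mem_cons_of_mem q hq')).2.2⟩)]
            by_cases hm : u.map (fun a => (a.1 : ℕ)) = p'.map Prod.snd
            · rw [if_pos hm, if_pos (by simp [ha, hm]), List.zip_cons_cons]
              simp only [List.map_cons, List.sum_cons]
              rw [pow_add]
            · rw [if_neg hm, if_neg (by simp [hm]), mul_zero]
          · rw [if_neg (by simp [ha]), MvPolynomial.C_mul_X_pow_eq_monomial,
              MvPolynomial.coeff_monomial_mul']
            by_cases hle : Finsupp.single q.1 (a.1 : ℕ) ≤ mon (q :: p')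
            · rw [if_pos hle]
              have hlt2 : (a.1 : ℕ) < q.2 := by
                have := Finsupp.single_le_iff.1 hle
                rw [hmonq] at this
                omega
              have hvmem : q.1 ∈ (mon (q :: p') - Finsupp.single q.1 (a.1 : ℕ)).support := by
                rw [Finsupp.mem_support_iff, Finsupp.tsub_apply, hmonq,
                  Finsupp.single_eq_same]
                omega
              have hnvar : q.1 ∉ (ephi r (q.1 - 1) u).vars := by
                intro hv
                have h2 := vars_ephi r (q.1 - 1) u hv
                rw [Finset.mem_Icc] at h2
                omega
              rw [coeff_zero_of_var _ _ q.1 hvmem hnvar, mul_zero]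
            · rw [if_neg hle]

end EulerAux

namespace EulerAux

lemma char_sum (r : ℕ) (hr : 0 < r) (d : ZMod r) :
    ∑ mv ∈ Finset.Icc 1 r, om r ^ (d.val * mv) = if d = 0 then (r : ℂ) else 0 := by
  haveI : NeZero r := ⟨hr.ne'⟩
  by_cases hd : d = 0
  · rw [if_pos hd, hd]
    simp [ZMod.val_zero, Nat.card_Icc]
  · rw [if_neg hd]
    set ζ := om r ^ d.val with hζ
    have hd' : 0 < d.val := Nat.pos_of_ne_zero (fun h => hd ((ZMod.val_eq_zero d).1 h))
    have hζ1 : ζ ≠ 1 :=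
      (Complex.isPrimitiveRoot_exp r hr.ne').pow_ne_one_of_pos_of_lt hd'.ne' (ZMod.val_lt d)
    have hζr : ζ ^ r = 1 := by
      rw [hζ, ← pow_mul, mul_comm, pow_mul, om_pow_r r hr, one_pow]
    have h1 : ∑ mv ∈ Finset.Icc 1 r, om r ^ (d.val * mv)
        = ζ * ∑ mv ∈ Finset.range r, ζ ^ mv := by
      rw [Finset.mul_sum, ← Finset.Ico_add_one_right_eq_Icc, Finset.sum_Ico_eq_sum_range]
      refine Finset.sum_congr (by norm_num) fun mv _ => ?_
      rw [pow_mul, pow_add, pow_one]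
    rw [h1, geom_sum_eq hζ1, hζr, sub_self, zero_div, mul_zero]

lemma zip_ofFn {α β : Type*} : ∀ {k : ℕ} (f : Fin k → α) (g : Fin k → β),
    (List.ofFn f).zip (List.ofFn g) = List.ofFn fun i => (f i, g i) := by
  intro k
  induction k with
  | zero => intro f g; rfl
  | succ k ih =>
      intro f g
      rw [List.ofFn_succ, List.ofFn_succ, List.ofFn_succ (f := fun i => (f i, g i)),
        List.zip_cons_cons, ih]

lemma om_sub (r : ℕ) (hr : 0 < r) (a b : ZMod r) (mv : ℕ) :
    om r ^ ((r - b.val + a.val) * mv) = om r ^ ((a - b).val * mv) := by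
  haveI : NeZero r := ⟨hr.ne'⟩
  refine om_modeq r hr (Nat.ModEq.mul_right mv ?_)
  have h : ((r - b.val + a.val : ℕ) : ZMod r) = (((a - b).val : ℕ) : ZMod r) := by
    push_cast [Nat.cast_sub (ZMod.val_lt b).le]
    rw [ZMod.natCast_val, ZMod.natCast_val, ZMod.natCast_val, ZMod.cast_id, ZMod.cast_id,
      ZMod.cast_id, ZMod.natCast_self]
    ring
  exact (ZMod.natCast_eq_natCast_iff _ _ _).1 h

lemma len_le_degE {r : ℕ} (w : List (ℕ+ × ZMod r)) : w.length ≤ degE w := by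
  induction w with
  | nil => simp [degE]
  | cons a u ih =>
      rw [degE_cons, List.length_cons]
      have := a.1.pos
      omega

end EulerAux

namespace EulerAux

lemma key (r : ℕ) [NeZero r] (hr : 0 < r) (n : ℕ) (x : List (ℕ+ × ZMod r) →₀ ℂ)
    (hz : ephiF r (n * r) x = 0) (w : List (ℕ+ × ZMod r)) (hw : w.length ≤ n)
    (mf : Fin w.length → ℕ) (hmf : ∀ l, 1 ≤ mf l ∧ mf l ≤ r) :
    ∑ j : Fin w.length → ZMod r,
      x (List.ofFn fun l => ((w.get l).1, j l)) * ∏ l, om r ^ ((j l).val * mf l) = 0 := by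
  classical
  haveI : NeZero r := ⟨hr.ne'⟩
  set nsf : Fin w.length → ℕ := fun l => (w.length - 1 - (l : ℕ)) * r + mf l with hnsf
  set p : List (ℕ × ℕ) := List.ofFn fun l => (nsf l, ((w.get l).1 : ℕ)) with hp
  set wd : (Fin w.length → ZMod r) → List (ℕ+ × ZMod r) :=
    fun j => List.ofFn fun l => ((w.get l).1, j l) with hwd
  have hpair : List.Pairwise (fun q q' => q'.1 < q.1) p := by
    rw [hp, List.pairwise_ofFn]
    intro i j hij
    show nsf j < nsf i
    calc nsf j = (w.length - 1 - (j : ℕ)) * r + mf j := rfl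
      _ ≤ (w.length - 1 - (j : ℕ)) * r + r := Nat.add_le_add_left (hmf j).2 _
      _ = ((w.length - 1 - (j : ℕ)) + 1) * r := by ring
      _ ≤ (w.length - 1 - (i : ℕ)) * r := Nat.mul_le_mul_right r
          (by have := j.isLt; have := i.isLt; omega)
      _ < (w.length - 1 - (i : ℕ)) * r + mf i := Nat.lt_add_of_pos_right (hmf i).1
  have hbnd : ∀ q ∈ p, 1 ≤ q.1 ∧ q.1 ≤ n * r ∧ 1 ≤ q.2 := by
    intro q hq
    rw [hp, List.mem_ofFn] at hq
    obtain ⟨l, rfl⟩ := hq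
    refine ⟨?_, ?_, (w.get l).1.pos⟩
    · show 1 ≤ (w.length - 1 - (l : ℕ)) * r + mf l
      exact le_trans (hmf l).1 (Nat.le_add_left _ _)
    · show (w.length - 1 - (l : ℕ)) * r + mf l ≤ n * r
      calc (w.length - 1 - (l : ℕ)) * r + mf l ≤ (w.length - 1 - (l : ℕ)) * r + r :=
            Nat.add_le_add_left (hmf l).2 _
        _ = ((w.length - 1 - (l : ℕ)) + 1) * r := by ring
        _ ≤ n * r := Nat.mul_le_mul_right r (by have := l.isLt; omega)
  have h0 : MvPolynomial.coeff (mon p) (ephiF r (n * r) x) = 0 := by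
    rw [hz, MvPolynomial.coeff_zero]
  rw [ephiF, Finsupp.sum, MvPolynomial.coeff_sum] at h0
  simp_rw [MvPolynomial.coeff_smul, smul_eq_mul,
    coeff_ephi r hr _ (n * r) p hpair hbnd, mul_ite, mul_zero] at h0
  rw [← Finset.sum_filter] at h0
  have hps : p.map Prod.snd = w.map (fun a => ((a.1 : ℕ+) : ℕ)) := by
    rw [hp, List.map_ofFn]
    have h1 : (Prod.snd ∘ fun l => (nsf l, ((w.get l).1 : ℕ)))
        = (fun a : ℕ+ × ZMod r => ((a.1 : ℕ+) : ℕ)) ∘ w.get := rfl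
    rw [h1, ← List.map_ofFn, List.ofFn_get]
  have hmatch : ∀ j : Fin w.length → ZMod r,
      (wd j).map (fun a => ((a.1 : ℕ+) : ℕ)) = p.map Prod.snd := by
    intro j
    rw [hps, hwd, List.map_ofFn]
    have h1 : ((fun a : ℕ+ × ZMod r => ((a.1 : ℕ+) : ℕ)) ∘ fun l => ((w.get l).1, j l))
        = (fun a : ℕ+ × ZMod r => ((a.1 : ℕ+) : ℕ)) ∘ w.get := rfl
    rw [h1, ← List.map_ofFn, List.ofFn_get]
  have hinv : ∀ w' : List (ℕ+ × ZMod r),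
      w'.map (fun a => ((a.1 : ℕ+) : ℕ)) = p.map Prod.snd →
      wd (fun l => (w'.getD (l : ℕ) (1, 0)).2) = w' := by
    intro w' hw2
    have hlen : w'.length = w.length := by
      have h3 := congrArg List.length hw2
      rw [List.length_map, hps, List.length_map] at h3
      exact h3
    refine List.ext_getElem (by simp [hwd, hlen]) ?_
    intro m h1 h2
    have hm : m < w.length := by simpa [hwd] using h1
    simp only [hwd, List.getElem_ofFn, List.get_eq_getElem]
    have hgd : w'.getD m (1, 0) = w'[m]'h2 := List.getD_eq_getElem _ _ h2
    have hfst : (w'[m]'h2).1 = (w[m]'hm).1 := by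
      have h3 := congrArg (fun L => L.getD m 0) hw2
      rw [hps] at h3
      rw [List.getD_eq_getElem _ _ (by simpa using h2),
        List.getD_eq_getElem _ _ (by simpa using hm)] at h3
      simp only [List.getElem_map] at h3
      exact PNat.coe_injective h3
    rw [hgd, ← hfst]
  have hstep : ∑ j : Fin w.length → ZMod r, x (wd j)
        * om r ^ (((wd j).zip p).map fun q => q.1.2.val * q.2.1).sum
      = ∑ w' ∈ x.support.filter
          (fun w' => w'.map (fun a => ((a.1 : ℕ+) : ℕ)) = p.map Prod.snd),
        x w' * om r ^ ((w'.zip p).map fun q => q.1.2.val * q.2.1).sum := by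
    rw [← Finset.sum_subset
      (Finset.filter_subset (fun j => wd j ∈ x.support) Finset.univ)
      (fun j _ hj => by
        rw [Finset.mem_filter] at hj
        push_neg at hj
        rw [Finsupp.notMem_support_iff.1 (hj (Finset.mem_univ j)), zero_mul])]
    refine Finset.sum_bij' (fun j _ => wd j)
      (fun w' _ => fun l => (w'.getD (l : ℕ) (1, 0)).2) ?_ ?_ ?_ ?_ ?_
    · intro j hj
      rw [Finset.mem_filter] at hj ⊢
      exact ⟨hj.2, hmatch j⟩
    · intro w' hw'
      rw [Finset.mem_filter] at hw' ⊢
      refine ⟨Finset.mem_univ _, ?_⟩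
      rw [hinv w' hw'.2]
      exact hw'.1
    · intro j hj
      funext l
      show ((wd j).getD (l : ℕ) (1, 0)).2 = j l
      rw [hwd, List.getD_eq_getElem _ _ (by simpa using l.isLt), List.getElem_ofFn]
    · intro w' hw'
      rw [Finset.mem_filter] at hw'
      exact hinv w' hw'.2
    · intro j hj
      rfl
  have hE : ∀ j : Fin w.length → ZMod r,
      om r ^ (((wd j).zip p).map fun q => q.1.2.val * q.2.1).sum
        = ∏ l, om r ^ ((j l).val * mf l) := by
    intro j
    rw [hwd, hp, zip_ofFn, List.map_ofFn, List.sum_ofFn]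
    have h1 : ((fun q : (ℕ+ × ZMod r) × ℕ × ℕ => q.1.2.val * q.2.1)
        ∘ fun l => (((w.get l).1, j l), nsf l, ((w.get l).1 : ℕ)))
        = fun l => (j l).val * nsf l := rfl
    rw [h1, ← Finset.prod_pow_eq_pow_sum]
    refine Finset.prod_congr rfl fun l _ => ?_
    refine om_modeq r hr ?_
    have h2 : (j l).val * nsf l
        = (j l).val * mf l + ((j l).val * (w.length - 1 - (l : ℕ))) * r := by
      rw [hnsf]; ring
    rw [h2]
    show _ % r = _ % r
    rw [Nat.add_mul_mod_self_right]
  calc ∑ j : Fin w.length → ZMod r,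
        x (List.ofFn fun l => ((w.get l).1, j l)) * ∏ l, om r ^ ((j l).val * mf l)
      = ∑ j : Fin w.length → ZMod r, x (wd j)
          * om r ^ (((wd j).zip p).map fun q => q.1.2.val * q.2.1).sum := by
        refine Finset.sum_congr rfl fun j _ => ?_
        rw [hE j, hwd]
    _ = 0 := by rw [hstep]; exact h0

end EulerAux

namespace EulerAux

lemma part3 (r : ℕ) (hr : 0 < r) (n : ℕ) (x : List (ℕ+ × ZMod r) →₀ ℂ)
    (hdeg : ∀ w ∈ x.support, degE w ≤ n) (hz : ephiF r (n * r) x = 0) : x = 0 := by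
  classical
  haveI : NeZero r := ⟨hr.ne'⟩
  ext w
  show x w = 0
  by_cases hw : w ∈ x.support
  swap
  · exact Finsupp.notMem_support_iff.1 hw
  have hk : w.length ≤ n := le_trans (len_le_degE w) (hdeg w hw)
  set j0 : Fin w.length → ZMod r := fun l => (w.get l).2 with hj0
  set wd : (Fin w.length → ZMod r) → List (ℕ+ × ZMod r) :=
    fun j => List.ofFn fun l => ((w.get l).1, j l) with hwd
  have hkey : ∀ mf ∈ Fintype.piFinset (fun _ : Fin w.length => Finset.Icc 1 r),
      ∑ j : Fin w.length → ZMod r, x (wd j) * ∏ l, om r ^ ((j l).val * mf l) = 0 := by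
    intro mf hmf
    rw [Fintype.mem_piFinset] at hmf
    exact key r hr n x hz w hk mf (fun l => Finset.mem_Icc.1 (hmf l))
  have horth : ∀ j : Fin w.length → ZMod r,
      ∑ mf ∈ Fintype.piFinset (fun _ : Fin w.length => Finset.Icc 1 r),
        ∏ l, om r ^ ((r - (j0 l).val + (j l).val) * mf l)
      = if j = j0 then ((r : ℂ)) ^ w.length else 0 := by
    intro j
    rw [show ∑ mf ∈ Fintype.piFinset (fun _ : Fin w.length => Finset.Icc 1 r),
        ∏ l, om r ^ ((r - (j0 l).val + (j l).val) * mf l)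
      = ∏ l, ∑ mv ∈ Finset.Icc 1 r, om r ^ ((r - (j0 l).val + (j l).val) * mv) from
      (Finset.prod_univ_sum (fun _ => Finset.Icc 1 r)
        (fun l v => om r ^ ((r - (j0 l).val + (j l).val) * v))).symm]
    have h1 : ∀ l : Fin w.length,
        ∑ mv ∈ Finset.Icc 1 r, om r ^ ((r - (j0 l).val + (j l).val) * mv)
        = if j l = j0 l then (r : ℂ) else 0 := by
      intro l
      have h2 : ∀ mv : ℕ, om r ^ ((r - (j0 l).val + (j l).val) * mv)
          = om r ^ ((j l - j0 l).val * mv) := fun mv => om_sub r hr (j l) (j0 l) mv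
      simp_rw [h2]
      rw [char_sum r hr (j l - j0 l)]
      congr 1
      simp [sub_eq_zero]
    rw [Finset.prod_congr rfl (fun l _ => h1 l)]
    by_cases hj : j = j0
    · rw [if_pos hj]
      simp [hj, Finset.prod_const, Finset.card_univ]
    · rw [if_neg hj]
      obtain ⟨l, hl⟩ := Function.ne_iff.1 hj
      exact Finset.prod_eq_zero (Finset.mem_univ l) (if_neg hl)
  have hfinal : ∑ mf ∈ Fintype.piFinset (fun _ : Fin w.length => Finset.Icc 1 r),
      (∏ l, om r ^ ((r - (j0 l).val) * mf l))
        * ∑ j : Fin w.length → ZMod r, x (wd j) * ∏ l, om r ^ ((j l).val * mf l) = 0 :=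
    Finset.sum_eq_zero fun mf hmf => by rw [hkey mf hmf, mul_zero]
  have hswap : ∑ mf ∈ Fintype.piFinset (fun _ : Fin w.length => Finset.Icc 1 r),
      (∏ l, om r ^ ((r - (j0 l).val) * mf l))
        * ∑ j : Fin w.length → ZMod r, x (wd j) * ∏ l, om r ^ ((j l).val * mf l)
      = ∑ j : Fin w.length → ZMod r, x (wd j)
          * ∑ mf ∈ Fintype.piFinset (fun _ : Fin w.length => Finset.Icc 1 r),
            ∏ l, om r ^ ((r - (j0 l).val + (j l).val) * mf l) := by
    simp_rw [Finset.mul_sum]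
    rw [Finset.sum_comm]
    refine Finset.sum_congr rfl fun j _ => ?_
    refine Finset.sum_congr rfl fun mf _ => ?_
    rw [mul_left_comm, ← Finset.prod_mul_distrib]
    congr 1
    refine Finset.prod_congr rfl fun l _ => ?_
    rw [← pow_add, ← add_mul]
  rw [hswap] at hfinal
  simp_rw [horth] at hfinal
  rw [Fintype.sum_eq_single j0 (fun j hj => by rw [if_neg hj, mul_zero]), if_pos rfl] at hfinal
  have hwdj0 : wd j0 = w := by
    have h : (fun l => ((w.get l).1, (w.get l).2)) = w.get := funext fun l => Prod.mk.eta
    show List.ofFn (fun l => ((w.get l).1, (w.get l).2)) = w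
    rw [h, List.ofFn_get]
  rw [hwdj0] at hfinal
  have hr0 : ((r : ℂ)) ^ w.length ≠ 0 :=
    pow_ne_zero _ (Nat.cast_ne_zero.2 hr.ne')
  exact (mul_eq_zero.1 hfinal).resolve_right hr0

end EulerAux


/-- For each `n ≥ 1`, `φ_n` is a homomorphism of graded algebras from the
Euler algebra `(Ɛ_r, *)` (the quasi-shuffle algebra on the letters `z_{m,i}`, `m ≥ 1`,
`i ∈ ℤ/r`) to `ℂ[t₁,…,tₙ]` (graded by `|t_i| = 1`, the image of a word of degree `d` being
homogeneous of total degree `d`); moreover `φ_{nr}` is injective in degrees `≤ n`. -/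
theorem ephi_hom_and_injective (r : ℕ) (hr : 0 < r) :
    (∀ n : ℕ, 1 ≤ n → ∀ w1 w2 : List (ℕ+ × ZMod r),
      ephiF r n (qsh ℂ (ebr r) w1 w2) = ephi r n w1 * ephi r n w2) ∧
    (∀ n : ℕ, ∀ w : List (ℕ+ × ZMod r), (ephi r n w).IsHomogeneous (degE w)) ∧
    (∀ n : ℕ, ∀ x : List (ℕ+ × ZMod r) →₀ ℂ,
      (∀ w ∈ x.support, degE w ≤ n) → ephiF r (n * r) x = 0 → x = 0) := by
  refine ⟨fun n _ w1 w2 => EulerAux.hom_aux r hr w1 w2 n,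
    fun n w => EulerAux.ephi_homog r n w,
    fun n x hdeg hz => EulerAux.part3 r hr n x hdeg hz⟩
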